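/- arXiv:1812.11646 — 4 statements merged into one kernel-verified Lean document; each statement's English description precedes it below -/
import Mathlib

section
/- Let n ≥ 1 and let σ : ℝⁿ → ℝⁿ be continuous. If p lies in the interior Λ° of Λ, then Γ(p) = {σ(p)}. -/
open scoped RealInnerProductSpace

/-- If `σ : ℝⁿ → ℝⁿ` is continuous and `p` lies in the interior of
`Λ = {p : (σ(q) - σ(p))·(q - p) ≥ 0 for all q}`, then
`Γ(p) = {β : (β - σ(q))·(p - q) ≥ 0 for all q ∈ Λ}` equals the singleton `{σ(p)}`. -/
theorem stmt1 (n : ℕ) (hn : 1 ≤ n)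
    (σ : EuclideanSpace ℝ (Fin n) → EuclideanSpace ℝ (Fin n))
    (hσ : Continuous σ)
    (Λ : Set (EuclideanSpace ℝ (Fin n)))
    (hΛ : Λ = {p | ∀ q, 0 ≤ ⟪σ q - σ p, q - p⟫})
    (Γ : EuclideanSpace ℝ (Fin n) → Set (EuclideanSpace ℝ (Fin n)))
    (hΓ : ∀ p, Γ p = {β | ∀ q ∈ Λ, 0 ≤ ⟪β - σ q, p - q⟫})
    (p : EuclideanSpace ℝ (Fin n))
    (hp : p ∈ interior Λ) :
    Γ p = {σ p} := by
  rw [hΓ]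
  apply Set.eq_singleton_iff_unique_mem.mpr
  constructor
  · intro q hq
    rw [hΛ] at hq
    exact hq p
  · intro β hβ
    -- get a ball around p inside Λ
    obtain ⟨ε, hε, hball⟩ := Metric.mem_nhds_iff.mp (mem_interior_iff_mem_nhds.mp hp)
    -- key: for every v, ⟪β - σ p, v⟫ ≤ 0
    have key : ∀ v : EuclideanSpace ℝ (Fin n), ⟪β - σ p, v⟫ ≤ 0 := by
      intro v
      have hcont : Filter.Tendsto (fun t : ℝ => ⟪β - σ (p + t • v), v⟫)
          (nhdsWithin 0 (Set.Ioi 0)) (nhds ⟪β - σ (p + (0:ℝ) • v), v⟫) := by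
        apply Filter.Tendsto.mono_left _ nhdsWithin_le_nhds
        exact ((continuous_const.sub (hσ.comp (continuous_const.add
          (continuous_id.smul continuous_const)))).inner continuous_const).tendsto 0
      have h0 : (fun t : ℝ => ⟪β - σ (p + t • v), v⟫) =ᶠ[nhdsWithin 0 (Set.Ioi 0)]
          (fun t => ⟪β - σ (p + t • v), v⟫) := Filter.EventuallyEq.rfl
      have hbound : ∀ᶠ t : ℝ in nhdsWithin 0 (Set.Ioi 0),
          ⟪β - σ (p + t • v), v⟫ ≤ 0 := by
        have hδ : 0 < ε / (‖v‖ + 1) := div_pos hε (by positivity)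
        filter_upwards [Ioo_mem_nhdsGT_of_mem (Set.left_mem_Ico.mpr hδ)] with t ht
        obtain ⟨ht0, htε⟩ := ht
        set q := p + t • v with hq
        have hqball : q ∈ Metric.ball p ε := by
          rw [Metric.mem_ball, dist_eq_norm]
          have : q - p = t • v := by simp [hq]
          rw [this, norm_smul, Real.norm_eq_abs, abs_of_pos ht0]
          calc t * ‖v‖ ≤ t * (‖v‖ + 1) := by nlinarith [norm_nonneg v]
            _ < ε / (‖v‖ + 1) * (‖v‖ + 1) := by
                apply mul_lt_mul_of_pos_right htε (by positivity)
            _ = ε := div_mul_cancel₀ ε (by positivity)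
        have hqΛ : q ∈ Λ := hball hqball
        have := hβ q hqΛ
        have hpq : p - q = -(t • v) := by simp [hq]
        rw [hpq, inner_neg_right, inner_smul_right] at this
        nlinarith
      have := le_of_tendsto hcont hbound
      simpa using this
    have h2 : ⟪β - σ p, β - σ p⟫ ≤ 0 := key _
    have h3 : β - σ p = 0 := by
      have := real_inner_self_nonneg (x := β - σ p)
      have : ⟪β - σ p, β - σ p⟫ = 0 := le_antisymm h2 this
      exact inner_self_eq_zero.mp this
    have := sub_eq_zero.mp h3
    exact this
end

section
/- Let n ≥ 1, let σ : ℝⁿ → ℝⁿ be any function, let g be the convex hull of (p, β) ↦ |σ(p) − β|², and for p ∈ ℝⁿ set Σ(p) = Γ(p) ∩ Z(p). Then for every p ∈ ℝⁿ, Σ(p) is a closed convex subset of ℝⁿ containing σ(p); moreover, if σ is continuous and p lies in the interior Λ° of Λ, then Σ(p) = {σ(p)}. -/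
/-!
`Γ(p)` is an intersection of closed half-spaces in `β`. The hull `g` is convex and finite, hence
continuous, and nonnegative since it dominates the convex minorant `0`; so `Z(p)` is the closed
sublevel set `{g(p, ·) ≤ 0}`. If `Λ` is a neighbourhood of `p`, testing `β ∈ Γ(p)` at
`q = p + t v` and letting `t → 0⁺` gives `⟪β - σ p, v⟫ ≤ 0` for all `v`, so `β = σ(p)`.
-/

open scoped RealInnerProductSpace
open Filter Topology Set

section InnerProduct

variable {E : Type*} [NormedAddCommGroup E] [InnerProductSpace ℝ E]

theorem isClosed_setOf_forall_inner_sub_nonneg (σ : E → E) (Λ : Set E) (p : E) :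
    IsClosed {β | ∀ q ∈ Λ, 0 ≤ ⟪β - σ q, p - q⟫} := by
  simp only [ofPred_forall]
  exact isClosed_biInter fun q _ =>
    isClosed_le continuous_const ((continuous_id.sub continuous_const).inner continuous_const)

theorem convex_setOf_forall_inner_sub_nonneg (σ : E → E) (Λ : Set E) (p : E) :
    Convex ℝ {β | ∀ q ∈ Λ, 0 ≤ ⟪β - σ q, p - q⟫} := by
  intro β₁ h₁ β₂ h₂ a b ha hb hab q hq
  have hsplit : a • β₁ + b • β₂ - σ q = a • (β₁ - σ q) + b • (β₂ - σ q) := by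
    match_scalars <;> linarith
  rw [hsplit, inner_add_left, real_inner_smul_left, real_inner_smul_left]
  have h₁q := h₁ q hq
  have h₂q := h₂ q hq
  positivity

theorem eq_of_forall_inner_sub_nonneg_of_mem_nhds {σ : E → E} {Λ : Set E} {p β : E}
    (hσ : ContinuousAt σ p) (hΛ : Λ ∈ 𝓝 p) (hβ : ∀ q ∈ Λ, 0 ≤ ⟪β - σ q, p - q⟫) :
    β = σ p := by
  have hneg : ∀ v, ⟪β - σ p, v⟫ ≤ 0 := by
    intro v
    have hline : Tendsto (fun t : ℝ => p + t • v) (𝓝 0) (𝓝 p) :=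
      (by fun_prop : Continuous fun t : ℝ => p + t • v).tendsto' 0 p (by simp)
    have hlim : Tendsto (fun t : ℝ => ⟪β - σ (p + t • v), v⟫) (𝓝[>] 0) (𝓝 ⟪β - σ p, v⟫) :=
      ((tendsto_const_nhds.sub (hσ.tendsto.comp hline)).inner tendsto_const_nhds).mono_left
        nhdsWithin_le_nhds
    refine le_of_tendsto hlim ?_
    filter_upwards [nhdsWithin_le_nhds (hline.eventually hΛ), self_mem_nhdsWithin]
      with t hq (ht : 0 < t)
    have h := hβ _ hq
    rw [show p - (p + t • v) = (-t) • v by rw [neg_smul]; abel, real_inner_smul_right] at h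
    nlinarith
  exact sub_eq_zero.1 (real_inner_self_nonpos.1 (hneg _))

end InnerProduct

theorem ConvexOn.convex_setOf_apply_mk_eq_zero {E F : Type*} [AddCommGroup E] [Module ℝ E]
    [AddCommGroup F] [Module ℝ F] {g : E × F → ℝ} (hg : ConvexOn ℝ univ g) (hg0 : ∀ x, 0 ≤ g x)
    (p : E) : Convex ℝ {β | g (p, β) = 0} := by
  have hset : {β | g (p, β) = 0} =
      {β ∈ univ | (g ∘ (AffineMap.const ℝ F p).prod (AffineMap.id ℝ F)) β ≤ 0} := by
    ext β
    simp [le_antisymm_iff, hg0 (p, β)]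
  rw [hset]
  exact (hg.comp_affineMap _).convex_le 0

theorem stmt3_general (n : ℕ)
    (σ : EuclideanSpace ℝ (Fin n) → EuclideanSpace ℝ (Fin n))
    (g : EuclideanSpace ℝ (Fin n) × EuclideanSpace ℝ (Fin n) → ℝ)
    (hg_conv : ConvexOn ℝ Set.univ g)
    (hg_le : ∀ a b, g (a, b) ≤ ‖σ a - b‖ ^ 2)
    (hg_max : ∀ h : EuclideanSpace ℝ (Fin n) × EuclideanSpace ℝ (Fin n) → ℝ,
      ConvexOn ℝ Set.univ h → (∀ a b, h (a, b) ≤ ‖σ a - b‖ ^ 2) →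
      ∀ a b, h (a, b) ≤ g (a, b))
    (Λ : Set (EuclideanSpace ℝ (Fin n)))
    (hΛ : Λ = {p | ∀ q, 0 ≤ ⟪σ q - σ p, q - p⟫})
    (Γ Z Sig : EuclideanSpace ℝ (Fin n) → Set (EuclideanSpace ℝ (Fin n)))
    (hΓ : ∀ p, Γ p = {β | ∀ q ∈ Λ, 0 ≤ ⟪β - σ q, p - q⟫})
    (hZ : ∀ p, Z p = {β | g (p, β) = 0})
    (hSig : ∀ p, Sig p = Γ p ∩ Z p)
    (p : EuclideanSpace ℝ (Fin n)) :
    IsClosed (Sig p) ∧ Convex ℝ (Sig p) ∧ σ p ∈ Sig p ∧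
      (Continuous σ → p ∈ interior Λ → Sig p = {σ p}) := by
  have hg0 : ∀ x, 0 ≤ g x := fun x =>
    hg_max 0 (convexOn_const 0 convex_univ) (fun _ _ => sq_nonneg _) x.1 x.2
  have hgc : Continuous g := continuousOn_univ.1 (hg_conv.continuousOn isOpen_univ)
  have hσΓ : σ p ∈ Γ p := by
    rw [hΓ]
    intro q hq
    rw [hΛ] at hq
    exact hq p
  have hσZ : σ p ∈ Z p := by
    rw [hZ]
    exact le_antisymm (by simpa using hg_le p (σ p)) (hg0 _)
  rw [hSig]
  refine ⟨?_, ?_, ⟨hσΓ, hσZ⟩, fun hσc hp => ?_⟩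
  · rw [hΓ, hZ]
    exact (isClosed_setOf_forall_inner_sub_nonneg σ Λ p).inter
      (isClosed_eq (hgc.comp (Continuous.prodMk_right p)) continuous_const)
  · rw [hΓ, hZ]
    exact (convex_setOf_forall_inner_sub_nonneg σ Λ p).inter
      (hg_conv.convex_setOf_apply_mk_eq_zero hg0 p)
  · refine Set.eq_singleton_iff_unique_mem.2 ⟨⟨hσΓ, hσZ⟩, fun β hβ => ?_⟩
    rw [hΓ] at hβ
    exact eq_of_forall_inner_sub_nonneg_of_mem_nhds hσc.continuousAt
      (mem_interior_iff_mem_nhds.1 hp) hβ.1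

/-- With `Λ`, `Γ`, `Z` as in the paper and `Σ(p) = Γ(p) ∩ Z(p)`:
for every `p`, `Σ(p)` is a closed convex subset of `ℝⁿ` containing `σ(p)`;
moreover, if `σ` is continuous and `p ∈ interior Λ`, then `Σ(p) = {σ(p)}`. -/
theorem stmt3 (n : ℕ) (hn : 1 ≤ n)
    (σ : EuclideanSpace ℝ (Fin n) → EuclideanSpace ℝ (Fin n))
    (g : EuclideanSpace ℝ (Fin n) × EuclideanSpace ℝ (Fin n) → ℝ)
    (hg_conv : ConvexOn ℝ Set.univ g)
    (hg_le : ∀ a b, g (a, b) ≤ ‖σ a - b‖ ^ 2)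
    (hg_max : ∀ h : EuclideanSpace ℝ (Fin n) × EuclideanSpace ℝ (Fin n) → ℝ,
      ConvexOn ℝ Set.univ h → (∀ a b, h (a, b) ≤ ‖σ a - b‖ ^ 2) →
      ∀ a b, h (a, b) ≤ g (a, b))
    (Λ : Set (EuclideanSpace ℝ (Fin n)))
    (hΛ : Λ = {p | ∀ q, 0 ≤ ⟪σ q - σ p, q - p⟫})
    (Γ Z Sig : EuclideanSpace ℝ (Fin n) → Set (EuclideanSpace ℝ (Fin n)))
    (hΓ : ∀ p, Γ p = {β | ∀ q ∈ Λ, 0 ≤ ⟪β - σ q, p - q⟫})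
    (hZ : ∀ p, Z p = {β | g (p, β) = 0})
    (hSig : ∀ p, Sig p = Γ p ∩ Z p)
    (p : EuclideanSpace ℝ (Fin n)) :
    IsClosed (Sig p) ∧ Convex ℝ (Sig p) ∧ σ p ∈ Sig p ∧
      (Continuous σ → p ∈ interior Λ → Sig p = {σ p}) :=
  stmt3_general n σ g hg_conv hg_le hg_max Λ hΛ Γ Z Sig hΓ hZ hSig p
end

section
/- Let n ≥ 1, N ≥ 1, let σ : ℝⁿ → ℝⁿ be a function, let q ∈ Λ, let p, β ∈ ℝⁿ, and let λ > 0. Let Q ⊆ ℝᴺ be a measurable set with 0 < |Q| < ∞. Suppose F_j, G_j : Q → ℝⁿ are square-integrable functions (j ∈ ℕ) such that: ∫_Q F_j = 0, ∫_Q G_j = 0, ∫_Q G_j(y)·F_j(y) dy = 0, ‖F_j‖_{L²(Q)} ≤ λ for all j; the functions H_j(y) := β + G_j(y) − σ(p + F_j(y)) are square-integrable on Q; and ∫_Q |H_j(y)|² dy → 0 as j → ∞. Then (β − σ(q))·(p − q) ≥ 0. -/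
/-!
Monotonicity of `σ` at `q` gives `0 ≤ ⟪σ(p + F_j) - σ q, p - q + F_j⟫` pointwise. Writing
`σ(p + F_j) = β + G_j - H_j` and integrating over `Q`, the zero means of `F_j, G_j` and the
orthogonality `∫ ⟪G_j, F_j⟫ = 0` reduce the integral to `|Q| ⟪β - σ q, p - q⟫ - ∫ ⟪H_j, p - q + F_j⟫`.
By Cauchy–Schwarz in `L²(Q)` the last term is at most `‖H_j‖₂ (‖p - q‖ |Q|^{1/2} + λ)`, which
tends to `0`.
-/

open MeasureTheory
open scoped RealInnerProductSpace

namespace MeasureTheory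

variable {α : Type*} {m : MeasurableSpace α} {μ : Measure α}
  {E : Type*} [NormedAddCommGroup E] [InnerProductSpace ℝ E] {f g : α → E}

lemma MemLp.integrable_inner (hf : MemLp f 2 μ) (hg : MemLp g 2 μ) :
    Integrable (fun x => ⟪f x, g x⟫) μ :=
  (L2.integrable_inner (𝕜 := ℝ) (hf.toLp f) (hg.toLp g)).congr <| by
    filter_upwards [hf.coeFn_toLp, hg.coeFn_toLp] with x hfx hgx
    rw [hfx, hgx]

lemma MemLp.norm_toLp_two_eq_sqrt (hf : MemLp f 2 μ) :
    ‖hf.toLp f‖ = √(∫ x, ‖f x‖ ^ 2 ∂μ) := by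
  rw [norm_eq_sqrt_real_inner, L2.inner_def]
  congr 1
  refine integral_congr_ae ?_
  filter_upwards [hf.coeFn_toLp] with x hx
  rw [hx, real_inner_self_eq_norm_sq]

lemma abs_integral_inner_le_sqrt_mul_sqrt (hf : MemLp f 2 μ) (hg : MemLp g 2 μ) :
    |∫ x, ⟪f x, g x⟫ ∂μ| ≤ √(∫ x, ‖f x‖ ^ 2 ∂μ) * √(∫ x, ‖g x‖ ^ 2 ∂μ) := by
  have h : ∫ x, ⟪f x, g x⟫ ∂μ = ⟪hf.toLp f, hg.toLp g⟫ := by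
    rw [L2.inner_def]
    refine integral_congr_ae ?_
    filter_upwards [hf.coeFn_toLp, hg.coeFn_toLp] with x hfx hgx
    rw [hfx, hgx]
  rw [h, ← hf.norm_toLp_two_eq_sqrt, ← hg.norm_toLp_two_eq_sqrt]
  exact abs_real_inner_le_norm _ _

lemma sqrt_integral_norm_add_sq_le (hf : MemLp f 2 μ) (hg : MemLp g 2 μ) :
    √(∫ x, ‖f x + g x‖ ^ 2 ∂μ) ≤ √(∫ x, ‖f x‖ ^ 2 ∂μ) + √(∫ x, ‖g x‖ ^ 2 ∂μ) := by
  have hfg := (hf.add hg).norm_toLp_two_eq_sqrt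
  simp only [Pi.add_apply] at hfg
  rw [← hf.norm_toLp_two_eq_sqrt, ← hg.norm_toLp_two_eq_sqrt, ← hfg, MemLp.toLp_add hf hg]
  exact norm_add_le _ _

end MeasureTheory

section MeanZero

variable {α : Type*} {m : MeasurableSpace α} {μ : Measure α} [IsFiniteMeasure μ]
  {E : Type*} [NormedAddCommGroup E] [InnerProductSpace ℝ E] [CompleteSpace E] {f g : α → E}

lemma integral_inner_const_add_const_add (hf : MemLp f 2 μ) (hg : MemLp g 2 μ)
    (hf0 : ∫ x, f x ∂μ = 0) (hg0 : ∫ x, g x ∂μ = 0) (hgf : ∫ x, ⟪g x, f x⟫ ∂μ = 0) (a b : E) :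
    ∫ x, ⟪a + g x, b + f x⟫ ∂μ = μ.real Set.univ * ⟪a, b⟫ := by
  have hfi : Integrable f μ := hf.integrable one_le_two
  have hgi : Integrable g μ := hg.integrable one_le_two
  have hgb : ∫ x, ⟪g x, b⟫ ∂μ = 0 := by
    simp_rw [real_inner_comm b]
    rw [integral_inner hgi, hg0, inner_zero_right]
  have haf : ∫ x, ⟪a, f x⟫ ∂μ = 0 := by rw [integral_inner hfi, hf0, inner_zero_right]
  have hab_af : Integrable (fun x => ⟪a, b⟫ + ⟪a, f x⟫) μ :=
    (integrable_const _).add (hfi.const_inner a)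
  have hgb_gf : Integrable (fun x => ⟪g x, b⟫ + ⟪g x, f x⟫) μ :=
    (hgi.inner_const b).add (hg.integrable_inner hf)
  simp_rw [inner_add_left, inner_add_right]
  rw [integral_add hab_af hgb_gf, integral_add (integrable_const _) (hfi.const_inner a),
    integral_add (hgi.inner_const b) (hg.integrable_inner hf), integral_const, haf, hgb, hgf,
    smul_eq_mul]
  ring

lemma neg_sqrt_mul_sqrt_le_measureReal_mul_inner {σ : E → E} {q p β : E}
    (hq : ∀ r, 0 ≤ ⟪σ r - σ q, r - q⟫) (hf : MemLp f 2 μ) (hg : MemLp g 2 μ)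
    (hf0 : ∫ x, f x ∂μ = 0) (hg0 : ∫ x, g x ∂μ = 0) (hgf : ∫ x, ⟪g x, f x⟫ ∂μ = 0)
    (hh : MemLp (fun x => β + g x - σ (p + f x)) 2 μ) :
    -(√(∫ x, ‖β + g x - σ (p + f x)‖ ^ 2 ∂μ) * √(∫ x, ‖p - q + f x‖ ^ 2 ∂μ)) ≤
      μ.real Set.univ * ⟪β - σ q, p - q⟫ := by
  have hpf : MemLp (fun x => p - q + f x) 2 μ := (memLp_const (p - q)).add hf
  have hmono : 0 ≤ ∫ x, ⟪β - σ q + g x, p - q + f x⟫ ∂μ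
      - ∫ x, ⟪β + g x - σ (p + f x), p - q + f x⟫ ∂μ := by
    have hbg : MemLp (fun x => β - σ q + g x) 2 μ := (memLp_const (β - σ q)).add hg
    rw [← integral_sub (hbg.integrable_inner hpf) (hh.integrable_inner hpf)]
    refine integral_nonneg fun x => ?_
    have hσ : β - σ q + g x - (β + g x - σ (p + f x)) = σ (p + f x) - σ q := by abel
    have hpq : p - q + f x = p + f x - q := by abel
    rw [← inner_sub_left, hσ, hpq]
    exact hq (p + f x)
  rw [integral_inner_const_add_const_add hf hg hf0 hg0 hgf] at hmono
  have hcs := abs_integral_inner_le_sqrt_mul_sqrt hh hpf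
  linarith [neg_abs_le (∫ x, ⟪β + g x - σ (p + f x), p - q + f x⟫ ∂μ)]

end MeanZero

theorem stmt7_general (n N : ℕ)
    (σ : EuclideanSpace ℝ (Fin n) → EuclideanSpace ℝ (Fin n))
    (q : EuclideanSpace ℝ (Fin n))
    (hq : ∀ r, 0 ≤ ⟪σ r - σ q, r - q⟫)
    (p β : EuclideanSpace ℝ (Fin n))
    (lam : ℝ)
    (Q : Set (EuclideanSpace ℝ (Fin N)))
    (hQ0 : 0 < volume Q) (hQtop : volume Q < ⊤)
    (F G : ℕ → EuclideanSpace ℝ (Fin N) → EuclideanSpace ℝ (Fin n))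
    (hF : ∀ j, MemLp (F j) 2 (volume.restrict Q))
    (hG : ∀ j, MemLp (G j) 2 (volume.restrict Q))
    (hF0 : ∀ j, ∫ y in Q, F j y = 0) (hG0 : ∀ j, ∫ y in Q, G j y = 0)
    (hGF : ∀ j, ∫ y in Q, ⟪G j y, F j y⟫ = 0)
    (hFlam : ∀ j, ∫ y in Q, ‖F j y‖ ^ 2 ≤ lam ^ 2)
    (hH : ∀ j, MemLp (fun y => β + G j y - σ (p + F j y)) 2 (volume.restrict Q))
    (hHto0 : Filter.Tendsto (fun j => ∫ y in Q, ‖β + G j y - σ (p + F j y)‖ ^ 2)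
      Filter.atTop (nhds 0)) :
    0 ≤ ⟪β - σ q, p - q⟫ := by
  have : IsFiniteMeasure (volume.restrict Q) := isFiniteMeasure_restrict.mpr hQtop.ne
  have hbound : ∀ j, -(√(∫ y in Q, ‖β + G j y - σ (p + F j y)‖ ^ 2) *
      (√(∫ _ in Q, ‖p - q‖ ^ 2) + √(lam ^ 2))) ≤
      (volume.restrict Q).real Set.univ * ⟪β - σ q, p - q⟫ := fun j => by
    refine le_trans ?_ (neg_sqrt_mul_sqrt_le_measureReal_mul_inner hq (hF j) (hG j) (hF0 j)
      (hG0 j) (hGF j) (hH j))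
    gcongr
    refine (sqrt_integral_norm_add_sq_le (memLp_const _) (hF j)).trans ?_
    gcongr
    exact hFlam j
  have hlim := (((Real.continuous_sqrt.tendsto 0).comp hHto0).mul_const
    (√(∫ _ in Q, ‖p - q‖ ^ 2) + √(lam ^ 2))).neg
  rw [Real.sqrt_zero, zero_mul, neg_zero] at hlim
  have hQpos : 0 < (volume.restrict Q).real Set.univ := by
    rw [measureReal_restrict_apply_univ]
    exact ENNReal.toReal_pos hQ0.ne' hQtop.ne
  exact (mul_nonneg_iff_of_pos_left hQpos).mp (le_of_tendsto' hlim hbound)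

/-- If `q ∈ Λ`, `‖F_j‖_{L²(Q)} ≤ λ`, `F_j, G_j` have zero mean over `Q`,
`∫_Q G_j·F_j = 0`, and `∫_Q ‖β + G_j - σ(p + F_j)‖² → 0`, then
`(β - σ(q))·(p - q) ≥ 0`. -/
theorem stmt7 (n N : ℕ) (hn : 1 ≤ n) (hN : 1 ≤ N)
    (σ : EuclideanSpace ℝ (Fin n) → EuclideanSpace ℝ (Fin n))
    (q : EuclideanSpace ℝ (Fin n))
    (hq : ∀ r, 0 ≤ ⟪σ r - σ q, r - q⟫)
    (p β : EuclideanSpace ℝ (Fin n))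
    (lam : ℝ) (hlam : 0 < lam)
    (Q : Set (EuclideanSpace ℝ (Fin N))) (hQm : MeasurableSet Q)
    (hQ0 : 0 < volume Q) (hQtop : volume Q < ⊤)
    (F G : ℕ → EuclideanSpace ℝ (Fin N) → EuclideanSpace ℝ (Fin n))
    (hF : ∀ j, MemLp (F j) 2 (volume.restrict Q))
    (hG : ∀ j, MemLp (G j) 2 (volume.restrict Q))
    (hF0 : ∀ j, ∫ y in Q, F j y = 0) (hG0 : ∀ j, ∫ y in Q, G j y = 0)
    (hGF : ∀ j, ∫ y in Q, ⟪G j y, F j y⟫ = 0)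
    (hFlam : ∀ j, ∫ y in Q, ‖F j y‖ ^ 2 ≤ lam ^ 2)
    (hH : ∀ j, MemLp (fun y => β + G j y - σ (p + F j y)) 2 (volume.restrict Q))
    (hHto0 : Filter.Tendsto (fun j => ∫ y in Q, ‖β + G j y - σ (p + F j y)‖ ^ 2)
      Filter.atTop (nhds 0)) :
    0 ≤ ⟪β - σ q, p - q⟫ :=
  stmt7_general n N σ q hq p β lam Q hQ0 hQtop F G hF hG hF0 hG0 hGF hFlam hH hHto0
end

section
/- Let n ≥ 1, N ≥ 1, and let σ : ℝⁿ → ℝⁿ satisfy the growth condition |σ(p)| ≤ c₁(|p| + 1) for all p ∈ ℝⁿ, where c₁ > 0. Let g be the convex hull of (a, b) ↦ |σ(a) − b|², let p, β ∈ ℝⁿ, and let Q ⊆ ℝᴺ be a measurable set with 0 < |Q| < ∞. Suppose F_j, G_j : Q → ℝⁿ are square-integrable functions (j ∈ ℕ) with ∫_Q F_j = 0 and ∫_Q G_j = 0, such that the functions y ↦ |β + G_j(y) − σ(p + F_j(y))|² are integrable on Q and ∫_Q |β + G_j(y) − σ(p + F_j(y))|² dy → 0 as j → ∞. Then g(p,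 β) = 0, i.e., β ∈ Z(p). -/
open MeasureTheory Set Filter Topology
open scoped ENNReal

/-!
Shifting the zero-mean fields `F_j, G_j` by `(p, β)` gives maps whose average over `Q` is
`(p, β)`. The convex hull `g` is continuous and, lying above the zero minorant, nonnegative,
so Jensen's inequality bounds `g (p, β)` by the average of `‖σ(p + F_j) - (β + G_j)‖²` over `Q`,
which tends to `0`.
-/

section Average

variable {α E : Type*} [MeasurableSpace α] {μ : Measure α} {s : Set α}
  [NormedAddCommGroup E] [NormedSpace ℝ E]

theorem setAverage_const_add_of_integral_eq_zero [CompleteSpace E] {f : α → E}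
    (h0 : μ s ≠ 0) (hs : μ s ≠ ∞) (hf : IntegrableOn f s μ) (hf0 : ∫ x in s, f x ∂μ = 0)
    (c : E) : ⨍ x in s, c + f x ∂μ = c := by
  have hμs : μ.real s ≠ 0 := ENNReal.toReal_ne_zero.mpr ⟨h0, hs⟩
  have : IsFiniteMeasure (μ.restrict s) := isFiniteMeasure_restrict.mpr hs
  rw [setAverage_eq, integral_add (integrable_const c) hf, hf0, add_zero, integral_const,
    measureReal_restrict_apply_univ, smul_smul, inv_mul_cancel₀ hμs, one_smul]

theorem setAverage_mono_of_le {f g : α → ℝ} (hf : IntegrableOn f s μ) (hg : IntegrableOn g s μ)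
    (hfg : ∀ x, f x ≤ g x) : ⨍ x in s, f x ∂μ ≤ ⨍ x in s, g x ∂μ := by
  simp only [setAverage_eq, smul_eq_mul]
  exact mul_le_mul_of_nonneg_left (integral_mono hf hg hfg) (by positivity)

theorem ConvexOn.map_setAverage_le_setAverage_of_le [FiniteDimensional ℝ E] {φ : E → ℝ}
    (hφ : ConvexOn ℝ univ φ) (hφ0 : ∀ x, 0 ≤ φ x) (h0 : μ s ≠ 0) (hs : μ s ≠ ∞)
    {f : α → E} {u : α → ℝ} (hf : IntegrableOn f s μ) (hu : IntegrableOn u s μ)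
    (hφu : ∀ x, φ (f x) ≤ u x) : φ (⨍ x in s, f x ∂μ) ≤ ⨍ x in s, u x ∂μ := by
  have hφc : Continuous φ := continuousOn_univ.mp (hφ.continuousOn isOpen_univ)
  have hφf : IntegrableOn (φ ∘ f) s μ :=
    hu.mono' (hφc.comp_aestronglyMeasurable hf.aestronglyMeasurable)
      (.of_forall fun x => by simpa [abs_of_nonneg (hφ0 _)] using hφu x)
  calc φ (⨍ x in s, f x ∂μ) ≤ ⨍ x in s, φ (f x) ∂μ :=
        hφ.map_set_average_le hφc.continuousOn isClosed_univ h0 hs (.of_forall fun _ => trivial)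
          hf hφf
    _ ≤ ⨍ x in s, u x ∂μ := setAverage_mono_of_le hφf hu hφu

end Average

theorem stmt8_general (n N : ℕ)
    (σ : EuclideanSpace ℝ (Fin n) → EuclideanSpace ℝ (Fin n))
    (g : EuclideanSpace ℝ (Fin n) × EuclideanSpace ℝ (Fin n) → ℝ)
    (hg_conv : ConvexOn ℝ Set.univ g)
    (hg_le : ∀ a b, g (a, b) ≤ ‖σ a - b‖ ^ 2)
    (hg_max : ∀ h : EuclideanSpace ℝ (Fin n) × EuclideanSpace ℝ (Fin n) → ℝ,
      ConvexOn ℝ Set.univ h → (∀ a b, h (a, b) ≤ ‖σ a - b‖ ^ 2) →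
      ∀ a b, h (a, b) ≤ g (a, b))
    (p β : EuclideanSpace ℝ (Fin n))
    (Q : Set (EuclideanSpace ℝ (Fin N)))
    (hQ0 : 0 < volume Q) (hQtop : volume Q < ⊤)
    (F G : ℕ → EuclideanSpace ℝ (Fin N) → EuclideanSpace ℝ (Fin n))
    (hF : ∀ j, MemLp (F j) 2 (volume.restrict Q))
    (hG : ∀ j, MemLp (G j) 2 (volume.restrict Q))
    (hF0 : ∀ j, ∫ y in Q, F j y = 0) (hG0 : ∀ j, ∫ y in Q, G j y = 0)
    (hint : ∀ j, IntegrableOn (fun y => ‖β + G j y - σ (p + F j y)‖ ^ 2) Q)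
    (hto0 : Filter.Tendsto (fun j => ∫ y in Q, ‖β + G j y - σ (p + F j y)‖ ^ 2)
      Filter.atTop (nhds 0)) :
    g (p, β) = 0 := by
  have : IsFiniteMeasure (volume.restrict Q) := isFiniteMeasure_restrict.mpr hQtop.ne
  have hg0 : ∀ x, 0 ≤ g x := fun ⟨a, b⟩ => by
    simpa using hg_max (fun _ => 0) (convexOn_const 0 convex_univ) (fun _ _ => sq_nonneg _) a b
  have hbound : ∀ j, g (p, β) ≤ ⨍ y in Q, ‖β + G j y - σ (p + F j y)‖ ^ 2 := fun j => by
    have hFG : IntegrableOn (fun y => (F j y, G j y)) Q :=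
      ((hF j).integrable one_le_two).prodMk ((hG j).integrable one_le_two)
    have havg : ⨍ y in Q, (p, β) + (F j y, G j y) = (p, β) :=
      setAverage_const_add_of_integral_eq_zero hQ0.ne' hQtop.ne hFG
        (by rw [integral_pair hFG.fst hFG.snd, hF0, hG0, Prod.mk_zero_zero]) _
    rw [← havg]
    refine hg_conv.map_setAverage_le_setAverage_of_le hg0 hQ0.ne' hQtop.ne
      ((integrable_const _).add hFG) (hint j) fun y => ?_
    simpa only [Prod.mk_add_mk, norm_sub_rev] using hg_le (p + F j y) (β + G j y)
  have hlim : Tendsto (fun j => ⨍ y in Q, ‖β + G j y - σ (p + F j y)‖ ^ 2) atTop (𝓝 0) := by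
    simpa [setAverage_eq] using hto0.const_smul (volume.real Q)⁻¹
  exact le_antisymm (ge_of_tendsto' hlim hbound) (hg0 _)

/-- If `σ` has linear growth, `g` is the convex hull of `(a, b) ↦ ‖σ(a) - b‖²`,
`F_j, G_j` are square-integrable with zero mean over `Q` (of finite positive measure),
and `∫_Q ‖β + G_j - σ(p + F_j)‖² → 0`, then `g(p, β) = 0`, i.e. `β ∈ Z(p)`. -/
theorem stmt8 (n N : ℕ) (hn : 1 ≤ n) (hN : 1 ≤ N)
    (σ : EuclideanSpace ℝ (Fin n) → EuclideanSpace ℝ (Fin n))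
    (c₁ : ℝ) (hc₁ : 0 < c₁)
    (hσ : ∀ p, ‖σ p‖ ≤ c₁ * (‖p‖ + 1))
    (g : EuclideanSpace ℝ (Fin n) × EuclideanSpace ℝ (Fin n) → ℝ)
    (hg_conv : ConvexOn ℝ Set.univ g)
    (hg_le : ∀ a b, g (a, b) ≤ ‖σ a - b‖ ^ 2)
    (hg_max : ∀ h : EuclideanSpace ℝ (Fin n) × EuclideanSpace ℝ (Fin n) → ℝ,
      ConvexOn ℝ Set.univ h → (∀ a b, h (a, b) ≤ ‖σ a - b‖ ^ 2) →
      ∀ a b, h (a, b) ≤ g (a, b))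
    (p β : EuclideanSpace ℝ (Fin n))
    (Q : Set (EuclideanSpace ℝ (Fin N))) (hQm : MeasurableSet Q)
    (hQ0 : 0 < volume Q) (hQtop : volume Q < ⊤)
    (F G : ℕ → EuclideanSpace ℝ (Fin N) → EuclideanSpace ℝ (Fin n))
    (hF : ∀ j, MemLp (F j) 2 (volume.restrict Q))
    (hG : ∀ j, MemLp (G j) 2 (volume.restrict Q))
    (hF0 : ∀ j, ∫ y in Q, F j y = 0) (hG0 : ∀ j, ∫ y in Q, G j y = 0)
    (hint : ∀ j, IntegrableOn (fun y => ‖β + G j y - σ (p + F j y)‖ ^ 2) Q)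
    (hto0 : Filter.Tendsto (fun j => ∫ y in Q, ‖β + G j y - σ (p + F j y)‖ ^ 2)
      Filter.atTop (nhds 0)) :
    g (p, β) = 0 :=
  stmt8_general n N σ g hg_conv hg_le hg_max p β Q hQ0 hQtop F G hF hG hF0 hG0 hint hto0
end
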